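/- arXiv:1803.08170 — 4 statements merged into one kernel-verified Lean document; each statement's English description precedes it below -/
import Mathlib

section
/- The pseudo-true fundamentals minimizing the Kullback-Leibler divergence from the true censored history distribution to the subjective censored history distribution satisfy μ₁* = μ₁• and μ₂*(c) = μ₂• − γ·(μ₁• − E[X₁ | X₁ ≤ c]), where X₁ ~ N(μ₁•, σ²). Consequently μ₂*(c) < μ₂• for all c ∈ ℝ and c ↦ μ₂*(c) is strictly increasing. -/
open MeasureTheory Set

/-- Gaussian density with mean `a` and variance `s2`. -/
noncomputable def gauss (a s2 x : ℝ) : ℝ :=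
  (Real.sqrt (2 * Real.pi * s2))⁻¹ * Real.exp (-(x - a) ^ 2 / (2 * s2))

/-- Mean of a `N(a, s2)` random variable truncated above at `c`, i.e. `E[X | X ≤ c]`. -/
noncomputable def truncMean (a s2 c : ℝ) : ℝ :=
  (∫ x in Iic c, x * gauss a s2 x) / (∫ x in Iic c, gauss a s2 x)

/-- KL divergence from the true censored history distribution (true fundamentals
`μ1b, μ2b`, independent draws) to the subjective censored history distribution with
fundamentals `μ1, μ2` and gambler's fallacy bias `γ`, censoring threshold `c`. -/
noncomputable def klObj (μ1b μ2b s2 γ c μ1 μ2 : ℝ) : ℝ :=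
  (∫ x in Ioi c, gauss μ1b s2 x * Real.log (gauss μ1b s2 x / gauss μ1 s2 x)) +
    ∫ x1 in Iic c, ∫ x2 : ℝ,
      gauss μ1b s2 x1 * gauss μ2b s2 x2 *
        Real.log (gauss μ1b s2 x1 * gauss μ2b s2 x2 /
          (gauss μ1 s2 x1 * gauss (μ2 - γ * (x1 - μ1)) s2 x2))

/-!
Integrating out `x₂` reduces the objective to
`((μ₁• - μ₁)² + ∫_{x ≤ c} (γ x + μ₂• - μ₂ - γ μ₁)² φ(x; μ₁•, σ²) dx) / (2σ²)`: the uncensored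
and censored pieces of the `x₁`-term reassemble into the KL divergence between `N(μ₁•, σ²)` and
`N(μ₁, σ²)`. Completing the square around the truncated mean `m = E[X₁ | X₁ ≤ c]`, the objective
exceeds its value at `(μ₁•, μ₂• - γ (μ₁• - m))` by
`((μ₁• - μ₁)² + P(X₁ ≤ c) (μ₂• - μ₂ - γ (μ₁ - m))²) / (2σ²)`.
For any positive density, the mean truncated at `c` lies below `c` and below the full mean, and
it increases strictly with `c` because raising the cutoff adds mass to the right of the old
truncated mean.
-/

open ProbabilityTheory

section TruncatedMean

variable {f : ℝ → ℝ}

lemma setIntegral_pos_of_pos {X : Type*} [MeasurableSpace X] {μ : Measure X} {g : X → ℝ}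
    {s : Set X} (hs : MeasurableSet s) (hμs : μ s ≠ 0) (hg : IntegrableOn g s μ)
    (hpos : ∀ x ∈ s, 0 < g x) : 0 < ∫ x in s, g x ∂μ := by
  refine (setIntegral_pos_iff_support_of_nonneg_ae
    (ae_restrict_of_forall_mem hs fun x hx => (hpos x hx).le) hg).mpr ?_
  rwa [inter_eq_self_of_subset_right (show s ⊆ g.support from fun x hx => (hpos x hx).ne'),
    pos_iff_ne_zero]

lemma integrable_sub_mul {μ : Measure ℝ} (hf : Integrable f μ)
    (hxf : Integrable (fun x => x * f x) μ) (c : ℝ) :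
    Integrable (fun x => (x - c) * f x) μ := by
  simp_rw [sub_mul]
  exact hxf.sub (hf.const_mul c)

lemma integral_sub_mul {μ : Measure ℝ} (hf : Integrable f μ)
    (hxf : Integrable (fun x => x * f x) μ) (c : ℝ) :
    ∫ x, (x - c) * f x ∂μ = ∫ x, x * f x ∂μ - c * ∫ x, f x ∂μ := by
  simp_rw [sub_mul]
  rw [integral_sub hxf (hf.const_mul c), integral_const_mul]

lemma integral_sq_affine_mul {μ : Measure ℝ} (hf : Integrable f μ)
    (hxf : Integrable (fun x => x * f x) μ) (hx2f : Integrable (fun x => x ^ 2 * f x) μ)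
    (u w : ℝ) :
    ∫ x, (u * x + w) ^ 2 * f x ∂μ =
      u ^ 2 * ∫ x, x ^ 2 * f x ∂μ + 2 * u * w * ∫ x, x * f x ∂μ + w ^ 2 * ∫ x, f x ∂μ := by
  have hexpand : ∀ x, (u * x + w) ^ 2 * f x =
      u ^ 2 * (x ^ 2 * f x) + 2 * u * w * (x * f x) + w ^ 2 * f x := fun x => by ring
  simp_rw [hexpand]
  rw [integral_add (f := fun x => u ^ 2 * (x ^ 2 * f x) + 2 * u * w * (x * f x))
      ((hx2f.const_mul _).add (hxf.const_mul _)) (hf.const_mul _),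
    integral_add (hx2f.const_mul _) (hxf.const_mul _),
    integral_const_mul, integral_const_mul, integral_const_mul]

lemma mul_setIntegral_lt_setIntegral_mul {s : Set ℝ} {c : ℝ} (hs : MeasurableSet s)
    (hvol : volume s ≠ 0) (hf : IntegrableOn f s) (hxf : IntegrableOn (fun x => x * f x) s)
    (hpos : ∀ x ∈ s, 0 < f x) (hc : ∀ x ∈ s, c < x) :
    c * ∫ x in s, f x < ∫ x in s, x * f x := by
  rw [← sub_pos, ← integral_sub_mul hf hxf]
  exact setIntegral_pos_of_pos hs hvol (integrable_sub_mul hf hxf c)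
    fun x hx => mul_pos (sub_pos.mpr (hc x hx)) (hpos x hx)

lemma setIntegral_mul_lt_mul_setIntegral {s : Set ℝ} {c : ℝ} (hs : MeasurableSet s)
    (hvol : volume s ≠ 0) (hf : IntegrableOn f s) (hxf : IntegrableOn (fun x => x * f x) s)
    (hpos : ∀ x ∈ s, 0 < f x) (hc : ∀ x ∈ s, x < c) :
    ∫ x in s, x * f x < c * ∫ x in s, f x := by
  rw [← sub_neg, ← integral_sub_mul hf hxf, ← neg_pos, ← integral_neg]
  exact setIntegral_pos_of_pos hs hvol (integrable_sub_mul hf hxf c).neg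
    fun x hx => by nlinarith [hpos x hx, hc x hx]

lemma setIntegral_Iic_mul_lt (hf : Integrable f) (hxf : Integrable fun x => x * f x)
    (hpos : ∀ x, 0 < f x) (c : ℝ) :
    ∫ x in Iic c, x * f x < c * ∫ x in Iic c, f x := by
  rw [integral_Iic_eq_integral_Iio, integral_Iic_eq_integral_Iio]
  exact setIntegral_mul_lt_mul_setIntegral measurableSet_Iio (by simp) hf.integrableOn
    hxf.integrableOn (fun x _ => hpos x) fun x hx => hx

lemma strictMono_setIntegral_Iic_mul_div (hf : Integrable f) (hxf : Integrable fun x => x * f x)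
    (hpos : ∀ x, 0 < f x) :
    StrictMono fun c => (∫ x in Iic c, x * f x) / ∫ x in Iic c, f x := by
  intro c₁ c₂ hc
  have hP₁ : 0 < ∫ x in Iic c₁, f x :=
    setIntegral_pos_of_pos measurableSet_Iic (by simp) hf.integrableOn fun x _ => hpos x
  have hP : 0 < ∫ x in Ioc c₁ c₂, f x :=
    setIntegral_pos_of_pos measurableSet_Ioc (by simp [hc]) hf.integrableOn fun x _ => hpos x
  have hM₁ := setIntegral_Iic_mul_lt hf hxf hpos c₁
  have hM := mul_setIntegral_lt_setIntegral_mul (s := Ioc c₁ c₂) measurableSet_Ioc (by simp [hc])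
    hf.integrableOn hxf.integrableOn (fun x _ => hpos x) fun x hx => hx.1
  dsimp only
  rw [← Iic_union_Ioc_eq_Iic hc.le,
    setIntegral_union (Iic_disjoint_Ioc le_rfl) measurableSet_Ioc hf.integrableOn hf.integrableOn,
    setIntegral_union (Iic_disjoint_Ioc le_rfl) measurableSet_Ioc hxf.integrableOn
      hxf.integrableOn,
    div_lt_div_iff₀ hP₁ (add_pos hP₁ hP)]
  nlinarith [mul_lt_mul_of_pos_right hM₁ hP, mul_lt_mul_of_pos_right hM hP₁]

lemma setIntegral_Iic_mul_div_lt {a : ℝ} (hf : Integrable f) (hxf : Integrable fun x => x * f x)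
    (hpos : ∀ x, 0 < f x) (hmean : ∫ x, x * f x = a * ∫ x, f x) (c : ℝ) :
    (∫ x in Iic c, x * f x) / ∫ x in Iic c, f x < a := by
  have hP : 0 < ∫ x in Iic c, f x :=
    setIntegral_pos_of_pos measurableSet_Iic (by simp) hf.integrableOn fun x _ => hpos x
  rw [div_lt_iff₀ hP]
  rcases le_or_gt c a with hca | hac
  · nlinarith [setIntegral_Iic_mul_lt hf hxf hpos c]
  · have hQ : 0 < ∫ x in Ioi c, f x :=
      setIntegral_pos_of_pos measurableSet_Ioi (by simp) hf.integrableOn fun x _ => hpos x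
    have hN := mul_setIntegral_lt_setIntegral_mul (s := Ioi c) measurableSet_Ioi (by simp)
      hf.integrableOn hxf.integrableOn (fun x _ => hpos x) fun x hx => hx
    have hsplit₀ := intervalIntegral.integral_Iic_add_Ioi (b := c) hf.integrableOn hf.integrableOn
    have hsplit₁ := intervalIntegral.integral_Iic_add_Ioi (b := c) hxf.integrableOn
      hxf.integrableOn
    linear_combination hN + mul_pos (sub_pos.mpr hac) hQ - a * hsplit₀ + hsplit₁ + hmean

end TruncatedMean

section Gauss

variable {s2 : ℝ}

lemma gauss_eq_gaussianPDFReal (hs2 : 0 ≤ s2) (a : ℝ) :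
    gauss a s2 = gaussianPDFReal a s2.toNNReal := by
  ext x
  rw [gaussianPDFReal, Real.coe_toNNReal _ hs2, gauss]

lemma gauss_pos (hs2 : 0 < s2) (a x : ℝ) : 0 < gauss a s2 x := by
  rw [gauss_eq_gaussianPDFReal hs2.le]
  exact gaussianPDFReal_pos _ _ _ (by simpa using hs2)

lemma integral_mul_gauss (hs2 : 0 < s2) (a : ℝ) (f : ℝ → ℝ) :
    ∫ x, f x * gauss a s2 x = ∫ x, f x ∂gaussianReal a s2.toNNReal := by
  rw [integral_gaussianReal_eq_integral_smul (by simpa using hs2), gauss_eq_gaussianPDFReal hs2.le]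
  simp_rw [smul_eq_mul, mul_comm]

lemma integrable_mul_gauss (hs2 : 0 < s2) {a : ℝ} {f : ℝ → ℝ}
    (hf : Integrable f (gaussianReal a s2.toNNReal)) :
    Integrable fun x => f x * gauss a s2 x := by
  rw [gaussianReal_of_var_ne_zero _ (by simpa using hs2),
    integrable_withDensity_iff_integrable_smul' (measurable_gaussianPDF _ _)
      (ae_of_all _ fun _ => gaussianPDF_lt_top)] at hf
  simpa [toReal_gaussianPDF, ← gauss_eq_gaussianPDFReal hs2.le, mul_comm] using hf

lemma integrable_sq_affine_gaussianReal (a : ℝ) (v : NNReal) (u w : ℝ) :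
    Integrable (fun x => (u * x + w) ^ 2) (gaussianReal a v) :=
  (((memLp_id_gaussianReal 2).const_mul u).add (memLp_const w)).integrable_sq

lemma integrable_affine_gaussianReal (a : ℝ) (v : NNReal) (u w : ℝ) :
    Integrable (fun x => u * x + w) (gaussianReal a v) :=
  (((memLp_id_gaussianReal 1).integrable le_rfl).const_mul u).add (integrable_const w)

lemma integral_affine_gaussianReal (a : ℝ) (v : NNReal) (u w : ℝ) :
    ∫ x, (u * x + w) ∂gaussianReal a v = u * a + w := by
  rw [integral_add (f := fun x => u * x)
      (((memLp_id_gaussianReal 1).integrable le_rfl).const_mul u) (integrable_const w),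
    integral_const_mul, integral_id_gaussianReal]
  simp

lemma integrable_gauss (hs2 : 0 < s2) (a : ℝ) : Integrable (gauss a s2) := by
  simpa using integrable_mul_gauss hs2 (integrable_const (1 : ℝ) (μ := gaussianReal a _))

lemma integral_gauss (hs2 : 0 < s2) (a : ℝ) : ∫ x, gauss a s2 x = 1 := by
  simpa using integral_mul_gauss hs2 a 1

lemma gauss_mul_log_gauss_div_gauss (hs2 : 0 < s2) (p q x : ℝ) :
    gauss p s2 x * Real.log (gauss p s2 x / gauss q s2 x) =
      ((p - q) / s2 * x + (q ^ 2 - p ^ 2) / (2 * s2)) * gauss p s2 x := by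
  have hK : (Real.sqrt (2 * Real.pi * s2))⁻¹ ≠ 0 := by positivity
  rw [gauss, gauss, mul_div_mul_left _ _ hK, ← Real.exp_sub, Real.log_exp]
  field_simp
  ring

lemma integrable_gauss_mul_log_gauss_div_gauss (hs2 : 0 < s2) (p q : ℝ) :
    Integrable fun x => gauss p s2 x * Real.log (gauss p s2 x / gauss q s2 x) := by
  simp_rw [gauss_mul_log_gauss_div_gauss hs2]
  exact integrable_mul_gauss hs2 (integrable_affine_gaussianReal _ _ _ _)

lemma integral_gauss_mul_log_gauss_div_gauss (hs2 : 0 < s2) (p q : ℝ) :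
    ∫ x, gauss p s2 x * Real.log (gauss p s2 x / gauss q s2 x) = (p - q) ^ 2 / (2 * s2) := by
  simp_rw [gauss_mul_log_gauss_div_gauss hs2]
  rw [integral_mul_gauss hs2, integral_affine_gaussianReal]
  field_simp
  ring

lemma integral_mul_gauss_mul_log_mul_gauss_div {C D : ℝ} (hs2 : 0 < s2) (hC : 0 < C) (hD : 0 < D)
    (p q : ℝ) :
    ∫ x, C * gauss p s2 x * Real.log (C * gauss p s2 x / (D * gauss q s2 x)) =
      C * (Real.log (C / D) + (p - q) ^ 2 / (2 * s2)) := by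
  have hsplit : ∀ x, C * gauss p s2 x * Real.log (C * gauss p s2 x / (D * gauss q s2 x)) =
      C * Real.log (C / D) * gauss p s2 x +
        C * (gauss p s2 x * Real.log (gauss p s2 x / gauss q s2 x)) := fun x => by
    have := gauss_pos hs2 p x
    have := gauss_pos hs2 q x
    rw [mul_div_mul_comm, Real.log_mul (by positivity) (by positivity)]
    ring
  simp_rw [hsplit]
  rw [integral_add ((integrable_gauss hs2 p).const_mul _)
      ((integrable_gauss_mul_log_gauss_div_gauss hs2 p q).const_mul _),
    integral_const_mul, integral_const_mul, integral_gauss hs2,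
    integral_gauss_mul_log_gauss_div_gauss hs2]
  ring

lemma integrable_id_mul_gauss (hs2 : 0 < s2) (a : ℝ) :
    Integrable fun x => x * gauss a s2 x :=
  integrable_mul_gauss hs2 ((memLp_id_gaussianReal 1).integrable le_rfl)

lemma integrable_sq_mul_gauss (hs2 : 0 < s2) (a : ℝ) :
    Integrable fun x => x ^ 2 * gauss a s2 x :=
  integrable_mul_gauss hs2 (memLp_id_gaussianReal 2).integrable_sq

lemma integral_id_mul_gauss (hs2 : 0 < s2) (a : ℝ) : ∫ x, x * gauss a s2 x = a := by
  rw [integral_mul_gauss hs2, integral_id_gaussianReal]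

lemma setIntegral_Iic_gauss_pos (hs2 : 0 < s2) (a c : ℝ) : 0 < ∫ x in Iic c, gauss a s2 x :=
  setIntegral_pos_of_pos measurableSet_Iic (by simp) (integrable_gauss hs2 a).integrableOn
    fun x _ => gauss_pos hs2 a x

lemma truncMean_lt (hs2 : 0 < s2) (a c : ℝ) : truncMean a s2 c < a :=
  setIntegral_Iic_mul_div_lt (integrable_gauss hs2 a) (integrable_id_mul_gauss hs2 a)
    (gauss_pos hs2 a) (by rw [integral_id_mul_gauss hs2, integral_gauss hs2, mul_one]) c

lemma strictMono_truncMean (hs2 : 0 < s2) (a : ℝ) : StrictMono (truncMean a s2) :=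
  strictMono_setIntegral_Iic_mul_div (integrable_gauss hs2 a) (integrable_id_mul_gauss hs2 a)
    (gauss_pos hs2 a)

lemma klObj_eq (hs2 : 0 < s2) (μ1b μ2b γ c μ1 μ2 : ℝ) :
    klObj μ1b μ2b s2 γ c μ1 μ2 =
      ((μ1b - μ1) ^ 2 + ∫ x in Iic c, (γ * x + (μ2b - μ2 - γ * μ1)) ^ 2 * gauss μ1b s2 x) /
        (2 * s2) := by
  have hinner : ∀ x1, (∫ x2, gauss μ1b s2 x1 * gauss μ2b s2 x2 *
      Real.log (gauss μ1b s2 x1 * gauss μ2b s2 x2 /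
        (gauss μ1 s2 x1 * gauss (μ2 - γ * (x1 - μ1)) s2 x2))) =
      gauss μ1b s2 x1 * Real.log (gauss μ1b s2 x1 / gauss μ1 s2 x1) +
        (γ * x1 + (μ2b - μ2 - γ * μ1)) ^ 2 * gauss μ1b s2 x1 / (2 * s2) := fun x1 => by
    rw [integral_mul_gauss_mul_log_mul_gauss_div hs2 (gauss_pos hs2 _ _) (gauss_pos hs2 _ _)]
    ring
  have hKL := integrable_gauss_mul_log_gauss_div_gauss hs2 μ1b μ1
  have hquad := (integrable_mul_gauss hs2
    (integrable_sq_affine_gaussianReal μ1b _ γ (μ2b - μ2 - γ * μ1))).div_const (2 * s2)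
  rw [klObj, setIntegral_congr_fun measurableSet_Iic fun x1 _ => hinner x1,
    integral_add hKL.integrableOn hquad.integrableOn, ← add_assoc, add_comm (∫ x in Ioi c, _),
    intervalIntegral.integral_Iic_add_Ioi hKL.integrableOn hKL.integrableOn,
    integral_gauss_mul_log_gauss_div_gauss hs2, integral_div, add_div]

lemma klObj_sub_klObj (hs2 : 0 < s2) (μ1b μ2b γ c μ1 μ2 : ℝ) :
    klObj μ1b μ2b s2 γ c μ1 μ2 -
        klObj μ1b μ2b s2 γ c μ1b (μ2b - γ * (μ1b - truncMean μ1b s2 c)) =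
      ((μ1b - μ1) ^ 2 + (∫ x in Iic c, gauss μ1b s2 x) *
        (μ2b - μ2 - γ * (μ1 - truncMean μ1b s2 c)) ^ 2) / (2 * s2) := by
  have hP := setIntegral_Iic_gauss_pos hs2 μ1b c
  have hM : ∫ x in Iic c, x * gauss μ1b s2 x =
      truncMean μ1b s2 c * ∫ x in Iic c, gauss μ1b s2 x := by
    rw [truncMean, div_mul_cancel₀ _ hP.ne']
  simp only [klObj_eq hs2, integral_sq_affine_mul (integrable_gauss hs2 μ1b).integrableOn
    (integrable_id_mul_gauss hs2 μ1b).integrableOn (integrable_sq_mul_gauss hs2 μ1b).integrableOn,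
    hM]
  ring

end Gauss

/-- The pseudo-true fundamentals satisfy `μ1* = μ1•` and
`μ2*(c) = μ2• − γ·(μ1• − E[X₁ | X₁ ≤ c])`; consequently `μ2*(c) < μ2•` for all `c`
and `c ↦ μ2*(c)` is strictly increasing. -/
theorem pseudo_true_fundamentals (μ1b μ2b s2 γ : ℝ) (hs2 : 0 < s2) (hγ : 0 < γ) :
    (∀ c μ1 μ2 : ℝ,
        (∀ μ1' μ2' : ℝ, klObj μ1b μ2b s2 γ c μ1 μ2 ≤ klObj μ1b μ2b s2 γ c μ1' μ2') →
        μ1 = μ1b ∧ μ2 = μ2b - γ * (μ1b - truncMean μ1b s2 c)) ∧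
    (∀ c : ℝ, μ2b - γ * (μ1b - truncMean μ1b s2 c) < μ2b) ∧
    StrictMono (fun c => μ2b - γ * (μ1b - truncMean μ1b s2 c)) := by
  refine ⟨fun c μ1 μ2 hmin => ?_, fun c => ?_, fun c₁ c₂ hc => ?_⟩
  · have hP := setIntegral_Iic_gauss_pos hs2 μ1b c
    have hle := hmin μ1b (μ2b - γ * (μ1b - truncMean μ1b s2 c))
    rw [← sub_nonpos, klObj_sub_klObj hs2, div_le_iff₀ (by positivity), zero_mul] at hle
    have hsq := mul_nonneg hP.le (sq_nonneg (μ2b - μ2 - γ * (μ1 - truncMean μ1b s2 c)))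
    have h₁ : (μ1b - μ1) ^ 2 = 0 := le_antisymm (by linarith) (sq_nonneg _)
    have h₂ : (∫ x in Iic c, gauss μ1b s2 x) *
        (μ2b - μ2 - γ * (μ1 - truncMean μ1b s2 c)) ^ 2 = 0 :=
      le_antisymm (by linarith [sq_nonneg (μ1b - μ1)]) hsq
    rw [sq_eq_zero_iff, sub_eq_zero] at h₁
    rw [mul_eq_zero, or_iff_right hP.ne', sq_eq_zero_iff] at h₂
    subst h₁
    exact ⟨rfl, by linarith⟩
  · nlinarith [truncMean_lt hs2 μ1b c]
  · nlinarith [strictMono_truncMean hs2 μ1b hc]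
end

section
/- Suppose the family of feasible models {F(·; θ₁, θ₂)} satisfies: the marginal of X₁ depends only on θ₁ with mean strictly increasing in θ₁, and the conditional mean E[X₂ | X₁ = x₁] is strictly increasing in θ₂ for each x₁, θ₁. Then the method-of-moments estimator (matching the censored dataset's first-draw mean and uncensored second-draw mean) is unique whenever it exists. -/
open MeasureTheory Set

/-- Abstract method-of-moments uniqueness. Feasible models are encoded by the marginal
distribution `ν θ₁` of `X₁` (depending only on `θ₁`) and the conditional-mean function
`g θ₁ θ₂ x₁ = E[X₂ | X₁ = x₁]`. If the mean of `X₁` is strictly increasing in `θ₁`, the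
conditional mean is strictly increasing in `θ₂`, the censoring event has positive
probability, and the conditional means are integrable, then the method-of-moments
estimator (matching the first-draw mean `m1` and the uncensored second-draw mean `m2`)
is unique whenever it exists. -/
theorem mom_estimator_unique
    (T1 T2 : Set ℝ) (ν : ℝ → Measure ℝ) (g : ℝ → ℝ → ℝ → ℝ) (c : ℝ)
    (hprob : ∀ θ1 ∈ T1, IsProbabilityMeasure (ν θ1))
    (hmean_mono : ∀ θ1 ∈ T1, ∀ θ1' ∈ T1, θ1 < θ1' →
        (∫ x, x ∂(ν θ1)) < ∫ x, x ∂(ν θ1'))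
    (hg_mono : ∀ θ1 ∈ T1, ∀ x : ℝ, StrictMonoOn (fun θ2 => g θ1 θ2 x) T2)
    (hpos : ∀ θ1 ∈ T1, 0 < ν θ1 (Iic c))
    (hint : ∀ θ1 ∈ T1, ∀ θ2 ∈ T2, IntegrableOn (g θ1 θ2) (Iic c) (ν θ1))
    (m1 m2 : ℝ) :
    ∀ θ1 ∈ T1, ∀ θ2 ∈ T2, ∀ θ1' ∈ T1, ∀ θ2' ∈ T2,
      (∫ x, x ∂(ν θ1)) = m1 →
      (∫ x in Iic c, g θ1 θ2 x ∂(ν θ1)) / (ν θ1 (Iic c)).toReal = m2 →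
      (∫ x, x ∂(ν θ1')) = m1 →
      (∫ x in Iic c, g θ1' θ2' x ∂(ν θ1')) / (ν θ1' (Iic c)).toReal = m2 →
      θ1 = θ1' ∧ θ2 = θ2' := by
  intro θ1 h1 θ2 h2 θ1' h1' θ2' h2' e1 e2 e1' e2'
  -- θ1 = θ1'
  have hθ1 : θ1 = θ1' := by
    rcases lt_trichotomy θ1 θ1' with h | h | h
    · exact absurd (e1.trans e1'.symm) (ne_of_lt (hmean_mono θ1 h1 θ1' h1' h))
    · exact h
    · exact absurd (e1'.trans e1.symm) (ne_of_lt (hmean_mono θ1' h1' θ1 h1 h))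
  subst hθ1
  refine ⟨rfl, ?_⟩
  -- key: strict monotonicity of the set integral in θ2
  have key : ∀ a ∈ T2, ∀ b ∈ T2, a < b →
      (∫ x in Iic c, g θ1 a x ∂(ν θ1)) < ∫ x in Iic c, g θ1 b x ∂(ν θ1) := by
    intro a ha b hb hab
    have hia := hint θ1 h1 a ha
    have hib := hint θ1 h1 b hb
    have hlt : ∀ x, g θ1 a x < g θ1 b x := fun x => hg_mono θ1 h1 x ha hb hab
    have hsub : IntegrableOn (fun x => g θ1 b x - g θ1 a x) (Iic c) (ν θ1) := hib.sub hia
    have hpos' : 0 < ∫ x in Iic c, (g θ1 b x - g θ1 a x) ∂(ν θ1) := by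
      rw [setIntegral_pos_iff_support_of_nonneg_ae
        (ae_of_all _ fun x => sub_nonneg.2 (hlt x).le) hsub]
      have : Function.support (fun x => g θ1 b x - g θ1 a x) = univ := by
        ext x; simp [sub_ne_zero.2 (hlt x).ne']
      rw [this, univ_inter]
      exact hpos θ1 h1
    have := integral_sub hib hia
    linarith [this ▸ hpos']
  have hne : (ν θ1 (Iic c)).toReal ≠ 0 := by
    have := hprob θ1 h1
    have hfin : ν θ1 (Iic c) ≠ ⊤ := (measure_lt_top _ _).ne
    exact (ENNReal.toReal_pos (hpos θ1 h1).ne' hfin).ne'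
  have heq : (∫ x in Iic c, g θ1 θ2 x ∂(ν θ1)) = ∫ x in Iic c, g θ1 θ2' x ∂(ν θ1) := by
    have := e2.trans e2'.symm
    field_simp at this
    exact this
  rcases lt_trichotomy θ2 θ2' with h | h | h
  · exact absurd heq (ne_of_lt (key θ2 h2 θ2' h2' h))
  · exact h
  · exact absurd heq.symm (ne_of_lt (key θ2' h2' θ2 h2 h))
end

section
/- Suppose (θ₁, θ₂) parametrize the unconditional means (E_F[X₁] = θ₁ and E_F[X₂] = θ₂) in every feasible model, and in every feasible model the conditional mean E[X₂ | X₁ = x₁] strictly decreases in x₁ (the gambler's fallacy condition). If the objective distribution F• has X₁, X₂ independent with means θ₁•, θ₂•, then any method-of-moments estimator from data censored at threshold c satisfies θ₁ᴹ(c) = θ₁• and θ₂ᴹ(c) < θ₂•. -/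
open MeasureTheory Set

/-! Under independence the censored moment is `m₂ = θ₂•`, whereas in every feasible model the
mean of `X₂` given `X₁ ≤ c` strictly exceeds the unconditional mean `θ₂`: a strictly decreasing
conditional mean `g` is at least `g c` on `X₁ ≤ c` and strictly below `g c` on `X₁ > c`, so
averaging over the lower event beats averaging over everything. Matching the moments therefore
forces `θ₂ < θ₂•`, while `θ₁ = θ₁•` is read off the first moment directly. -/

namespace MeasureTheory

variable {α : Type*} [MeasurableSpace α] {μ : Measure α} {f : α → ℝ} {s : Set α} {m : ℝ}

theorem setIntegral_lt_const_mul_measureReal (hs : MeasurableSet s) (hμs : μ s ≠ ⊤)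
    (hμs₀ : μ s ≠ 0) (hfi : IntegrableOn f s μ) (hlt : ∀ x ∈ s, f x < m) :
    ∫ x in s, f x ∂μ < m * μ.real s := by
  have hconst : IntegrableOn (fun _ => m) s μ := integrableOn_const hμs
  have hgap_pos : 0 < ∫ x in s, (m - f x) ∂μ := by
    rw [setIntegral_pos_iff_support_of_nonneg_ae (f := fun x => m - f x) _
      (hconst.sub hfi)]
    · have hsupp : Function.support (fun x => m - f x) ∩ s = s :=
        inter_eq_right.mpr fun x hx => sub_ne_zero.mpr (hlt x hx).ne'
      rw [hsupp]
      exact pos_iff_ne_zero.mpr hμs₀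
    · filter_upwards [ae_restrict_mem hs] with x hx
      exact sub_nonneg.mpr (hlt x hx).le
  rw [integral_sub hconst hfi, setIntegral_const, smul_eq_mul] at hgap_pos
  linarith

theorem integral_lt_setIntegral_div_measureReal [IsProbabilityMeasure μ] (hs : MeasurableSet s)
    (hμs : 0 < μ s) (hμsc : μ sᶜ ≠ 0) (hfi : Integrable f μ) (hle : ∀ x ∈ s, m ≤ f x)
    (hlt : ∀ x ∈ sᶜ, f x < m) :
    ∫ x, f x ∂μ < (∫ x in s, f x ∂μ) / μ.real s := by
  set p := μ.real s
  set A := ∫ x in s, f x ∂μ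
  have hp : 0 < p := ENNReal.toReal_pos hμs.ne' (measure_ne_top μ s)
  have hsplit : A + ∫ x in sᶜ, f x ∂μ = ∫ x, f x ∂μ := integral_add_compl hs hfi
  have hcompl : μ.real sᶜ = 1 - p := probReal_compl_eq_one_sub hs
  have hlower : m * p ≤ A :=
    setIntegral_ge_of_const_le_real hs (measure_ne_top μ s) hle hfi.integrableOn
  have hupper : ∫ x in sᶜ, f x ∂μ < m * (1 - p) := hcompl ▸
    setIntegral_lt_const_mul_measureReal hs.compl (measure_ne_top μ _) hμsc hfi.integrableOn hlt
  have hq : 0 ≤ 1 - p := hcompl ▸ measureReal_nonneg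
  rw [lt_div_iff₀ hp, ← hsplit]
  nlinarith [mul_le_mul_of_nonneg_right hlower hq]

theorem integral_lt_setIntegral_Iic_div_of_strictAnti {f : ℝ → ℝ} {μ : Measure ℝ}
    [IsProbabilityMeasure μ] (hf : StrictAnti f) (hfi : Integrable f μ) (c : ℝ)
    (hpos : 0 < μ (Iic c)) (hlt1 : μ (Iic c) < 1) :
    ∫ x, f x ∂μ < (∫ x in Iic c, f x ∂μ) / μ.real (Iic c) := by
  have hIoi : μ (Iic c)ᶜ ≠ 0 := by
    rw [prob_compl_eq_one_sub measurableSet_Iic]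
    exact (tsub_pos_of_lt hlt1).ne'
  refine integral_lt_setIntegral_div_measureReal measurableSet_Iic hpos hIoi hfi
    (fun x hx => hf.antitone hx) fun x hx => hf ?_
  simpa using hx

end MeasureTheory

/-- Abstract method-of-moments pessimism. Feasible models are encoded by the marginal
distribution `ν θ₁` of `X₁` and the conditional-mean function `g θ₁ θ₂ x₁ = E[X₂ | X₁ = x₁]`.
The parameters are the unconditional means: `E[X₁] = θ₁` and `E[X₂] = θ₂`. The gambler's
fallacy condition is that `g` strictly decreases in `x₁`. If the objective distribution has
independent draws with means `θ₁•, θ₂•` (so the censored dataset's moments are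
`m₁ = θ₁•` and `m₂ = θ₂•`), then any method-of-moments estimator satisfies
`θ₁ᴹ = θ₁•` and `θ₂ᴹ < θ₂•`. -/
theorem mom_estimator_pessimism
    (T1 T2 : Set ℝ) (ν : ℝ → Measure ℝ) (g : ℝ → ℝ → ℝ → ℝ) (c : ℝ) (θ1b θ2b : ℝ)
    (hprob : ∀ θ1 ∈ T1, IsProbabilityMeasure (ν θ1))
    (hmean_param : ∀ θ1 ∈ T1, (∫ x, x ∂(ν θ1)) = θ1)
    (htotal : ∀ θ1 ∈ T1, ∀ θ2 ∈ T2, (∫ x, g θ1 θ2 x ∂(ν θ1)) = θ2)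
    (hg_anti : ∀ θ1 ∈ T1, ∀ θ2 ∈ T2, StrictAnti (g θ1 θ2))
    (hpos : ∀ θ1 ∈ T1, 0 < ν θ1 (Iic c))
    (hlt1 : ∀ θ1 ∈ T1, ν θ1 (Iic c) < 1)
    (hint : ∀ θ1 ∈ T1, ∀ θ2 ∈ T2, Integrable (g θ1 θ2) (ν θ1)) :
    ∀ θ1 ∈ T1, ∀ θ2 ∈ T2,
      (∫ x, x ∂(ν θ1)) = θ1b →
      (∫ x in Iic c, g θ1 θ2 x ∂(ν θ1)) / (ν θ1 (Iic c)).toReal = θ2b →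
      θ1 = θ1b ∧ θ2 < θ2b := by
  intro θ1 h1 θ2 h2 hm1 hm2
  have := hprob θ1 h1
  refine ⟨(hmean_param θ1 h1).symm.trans hm1, ?_⟩
  rw [← htotal θ1 h1 θ2 h2, ← hm2]
  exact integral_lt_setIntegral_Iic_div_of_strictAnti (hg_anti θ1 h1 θ2 h2) (hint θ1 h1 θ2 h2) c
    (hpos θ1 h1) (hlt1 θ1 h1)
end

section
/- In the L-period model with history-independent cutoff thresholds (c₁, ..., c_L), the pseudo-true fundamentals admit the path-counting formula μᵢ* = μᵢ• + Σ_{j=1}^{i−1} (Σ_{p ∈ P[i→j]} W(p))·(μⱼ• − E[Xⱼ | Xⱼ ≤ cⱼ]), where P[i→j] is the set of strictly decreasing index paths from i to j and W(p) is the product of edge weights −γ_{k,m} along path p. -/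
open MeasureTheory Set

/-- The weight of a path given as the list of its nodes: the product of the edge
weights `−γ_{a,b}` over consecutive nodes `a, b`. -/
noncomputable def listWeight (γ : ℕ → ℕ → ℝ) : List ℕ → ℝ
  | a :: b :: rest => (-(γ a b)) * listWeight γ (b :: rest)
  | _ => 1

/-- The total weight `Σ_{p ∈ P[i→j]} W(p)` over all strictly decreasing paths from
`i` to `j`: each such path is identified with its set `S ⊆ (j, i)` of intermediate
nodes, traversed in decreasing order. -/
noncomputable def pathWeightSum (γ : ℕ → ℕ → ℝ) (i j : ℕ) : ℝ :=
  ∑ S ∈ (Finset.Ioo j i).powerset,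
    listWeight γ (i :: ((S.sort (· ≤ ·)).reverse ++ [j]))

/-!
Splitting every decreasing path from `i` to `j` according to its first step gives the recursion
`P(i,j) = −γ_{i,j} + Σ_{j<k<i} (−γ_{i,k}) P(k,j)` for the total path weight. Feeding it into
the closed form shows that the closed form satisfies the defining recursion of `μ*`, which
determines `μ*` by strong induction on `i`.
-/

theorem Finset.sort_insert_of_forall_lt {α : Type*} [LinearOrder α] {s : Finset α} {a : α}
    (h : ∀ x ∈ s, x < a) : (insert a s).sort (· ≤ ·) = s.sort (· ≤ ·) ++ [a] := by
  have hsorted : (s.sort (· ≤ ·) ++ [a]).Pairwise (· ≤ ·) :=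
    List.pairwise_append.2 ⟨s.pairwise_sort _, List.pairwise_singleton _ a,
      fun x hx y hy => List.mem_singleton.1 hy ▸ (h x ((s.mem_sort _).1 hx)).le⟩
  have hnodup : (s.sort (· ≤ ·) ++ [a]).Nodup :=
    List.nodup_append.2 ⟨s.sort_nodup _, List.nodup_singleton a,
      fun x hx y hy => List.mem_singleton.1 hy ▸ (h x ((s.mem_sort _).1 hx)).ne⟩
  have htoFinset : (s.sort (· ≤ ·) ++ [a]).toFinset = insert a s := by
    rw [List.toFinset_append, Finset.sort_toFinset, Finset.union_comm]
    rfl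
  rw [← htoFinset]
  exact (List.toFinset_sort _ hnodup).2 hsorted

noncomputable def pathWeightSumVia (γ : ℕ → ℕ → ℝ) (i : ℕ) (A : Finset ℕ) (j : ℕ) : ℝ :=
  ∑ S ∈ A.powerset, listWeight γ (i :: ((S.sort (· ≤ ·)).reverse ++ [j]))

theorem pathWeightSum_eq_pathWeightSumVia (γ : ℕ → ℕ → ℝ) (i j : ℕ) :
    pathWeightSum γ i j = pathWeightSumVia γ i (Finset.Ioo j i) j := rfl

theorem pathWeightSumVia_empty (γ : ℕ → ℕ → ℝ) (i j : ℕ) :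
    pathWeightSumVia γ i ∅ j = -γ i j := by
  simp [pathWeightSumVia, listWeight]

theorem pathWeightSumVia_insert_of_forall_lt (γ : ℕ → ℕ → ℝ) {A : Finset ℕ} {a : ℕ}
    (ha : ∀ x ∈ A, x < a) (i j : ℕ) :
    pathWeightSumVia γ i (insert a A) j =
      pathWeightSumVia γ i A j + -γ i a * pathWeightSumVia γ a A j := by
  rw [pathWeightSumVia, Finset.sum_powerset_insert fun haA => lt_irrefl a (ha a haA),
    pathWeightSumVia, pathWeightSumVia, Finset.mul_sum]
  refine congrArg _ (Finset.sum_congr rfl fun S hS => ?_)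
  rw [Finset.sort_insert_of_forall_lt fun x hx => ha x (Finset.mem_powerset.1 hS hx),
    List.reverse_append, List.reverse_singleton, List.singleton_append, List.cons_append,
    listWeight]

theorem pathWeightSumVia_eq_first_step (γ : ℕ → ℕ → ℝ) (A : Finset ℕ) (i j : ℕ) :
    pathWeightSumVia γ i A j =
      -γ i j + ∑ k ∈ A, -γ i k * pathWeightSumVia γ k {x ∈ A | x < k} j := by
  induction A using Finset.induction_on_max generalizing i with
  | empty => simp [pathWeightSumVia_empty]
  | insert a A ha ih =>
    have haA : a ∉ A := fun h => lt_irrefl a (ha a h)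
    have hbelow_a : {x ∈ insert a A | x < a} = A := by
      rw [Finset.filter_insert, if_neg (lt_irrefl a), Finset.filter_true_of_mem ha]
    have hbelow_k : ∀ k ∈ A, {x ∈ insert a A | x < k} = {x ∈ A | x < k} := fun k hk => by
      rw [Finset.filter_insert, if_neg (ha k hk).not_gt]
    have hrest : ∑ k ∈ A, -γ i k * pathWeightSumVia γ k {x ∈ insert a A | x < k} j =
        ∑ k ∈ A, -γ i k * pathWeightSumVia γ k {x ∈ A | x < k} j :=
      Finset.sum_congr rfl fun k hk => by rw [hbelow_k k hk]
    rw [pathWeightSumVia_insert_of_forall_lt γ ha, ih, Finset.sum_insert haA, hbelow_a, hrest]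
    ring

theorem pathWeightSum_eq_first_step (γ : ℕ → ℕ → ℝ) (i j : ℕ) :
    pathWeightSum γ i j = -γ i j + ∑ k ∈ Finset.Ioo j i, -γ i k * pathWeightSum γ k j := by
  rw [pathWeightSum_eq_pathWeightSumVia, pathWeightSumVia_eq_first_step]
  refine congrArg _ (Finset.sum_congr rfl fun k hk => ?_)
  have hbelow_k : {x ∈ Finset.Ioo j i | x < k} = Finset.Ioo j k := by
    ext x
    simp only [Finset.mem_filter, Finset.mem_Ioo] at hk ⊢
    omega
  rw [hbelow_k, pathWeightSum_eq_pathWeightSumVia]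

theorem sum_pathWeightSum_mul (γ : ℕ → ℕ → ℝ) (d : ℕ → ℝ) (i : ℕ) :
    ∑ j ∈ Finset.range i, pathWeightSum γ i j * d j =
      -∑ j ∈ Finset.range i,
        γ i j * (d j + ∑ k ∈ Finset.range j, pathWeightSum γ j k * d k) := by
  have hswap : ∑ j ∈ Finset.range i, ∑ k ∈ Finset.Ioo j i, γ i k * pathWeightSum γ k j * d j =
      ∑ k ∈ Finset.range i, ∑ j ∈ Finset.range k, γ i k * pathWeightSum γ k j * d j :=
    Finset.sum_comm' fun j k => by simp only [Finset.mem_range, Finset.mem_Ioo]; omega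
  simp only [pathWeightSum_eq_first_step γ i, add_mul, Finset.sum_mul, mul_add,
    Finset.mul_sum, Finset.sum_add_distrib, ← mul_assoc, neg_mul, Finset.sum_neg_distrib]
  rw [hswap]
  ring

theorem path_counting_formula_general (L : ℕ) (μb : ℕ → ℝ) (γ : ℕ → ℕ → ℝ) (s2 : ℝ)
    (c : ℕ → ℝ) (μstar : ℕ → ℝ)
    (hrec : ∀ i < L, μstar i =
      μb i - ∑ j ∈ Finset.range i, γ i j * (μstar j - truncMean (μb j) s2 (c j))) :
    ∀ i < L, μstar i =
      μb i + ∑ j ∈ Finset.range i,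
        pathWeightSum γ i j * (μb j - truncMean (μb j) s2 (c j)) := by
  set d : ℕ → ℝ := fun j => μb j - truncMean (μb j) s2 (c j)
  intro i
  induction i using Nat.strong_induction_on with
  | _ i ih =>
    intro hi
    rw [hrec i hi, sum_pathWeightSum_mul γ d, sub_eq_add_neg]
    congr 2
    refine Finset.sum_congr rfl fun j hj => ?_
    have hj : j < i := Finset.mem_range.1 hj
    rw [ih j hj (hj.trans hi)]
    ring

/-- In the `L`-period model with history-independent cutoffs `(c i)`, the pseudo-true
fundamentals, defined by the recursion
`μᵢ* = μᵢ• − Σ_{j<i} γ_{i,j}(μⱼ* − E[Xⱼ|Xⱼ ≤ cⱼ])`, admit the path-counting closed form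
`μᵢ* = μᵢ• + Σ_{j<i} (Σ_{p ∈ P[i→j]} W(p))·(μⱼ• − E[Xⱼ|Xⱼ ≤ cⱼ])`. -/
theorem path_counting_formula (L : ℕ) (μb : ℕ → ℝ) (γ : ℕ → ℕ → ℝ) (s2 : ℝ)
    (hs2 : 0 < s2) (c : ℕ → ℝ) (μstar : ℕ → ℝ)
    (hrec : ∀ i < L, μstar i =
      μb i - ∑ j ∈ Finset.range i, γ i j * (μstar j - truncMean (μb j) s2 (c j))) :
    ∀ i < L, μstar i =
      μb i + ∑ j ∈ Finset.range i,
        pathWeightSum γ i j * (μb j - truncMean (μb j) s2 (c j)) :=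
  path_counting_formula_general L μb γ s2 c μstar hrec
end
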